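/- Let L ⊆ K be number fields, let S be a nonempty finite set of maximal ideals of 𝒪_K, and let β be a function assigning to each maximal ideal ν of 𝒪_K a nonzero element β_ν ∈ L^×. Assume: (i) for every α ∈ K^× with val_𝔭(α) = 0 for all 𝔭 ∈ S, one has N_{K/L}(α) = ∏_{𝔮 ∉ S} β_𝔮^{val_𝔮(α)} (a finite product over the maximal ideals 𝔮 not in S); and (ii) for each 𝔭 ∈ S there exists x_𝔭 ∈ K^× with val_𝔭(x_𝔭) = 1, val_{𝔭'}(x_𝔭) = 0 for every 𝔭' ∈ S with 𝔭' ≠ 𝔭, and β_𝔭 = N_{K/L}(x_𝔭) · ∏_{𝔮 ∉ S} β_𝔮^{−val_𝔮(x_𝔭)}. Then for every α ∈ K^× one has N_{K/L}(α) = ∏_{ν} β_ν^{val_ν(α)}, the (finite) product ranging over all maximal ideals ν of 𝒪_K. -/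

import Mathlib

open NumberField IsDedekindDomain

/-- The normalized `ℤ`-valued valuation of `K` attached to a maximal ideal `ν` of `𝒪_K`
(a maximal ideal of `𝒪_K` is the same thing as a nonzero prime, i.e. an element of the
height-one spectrum), evaluated at a nonzero element `α` of `K`. -/
noncomputable def valZ {K : Type*} [Field K] [NumberField K]
    (ν : HeightOneSpectrum (𝓞 K)) (α : Kˣ) : ℤ :=
  - Multiplicative.toAdd (WithZero.unzero
      (show ν.valuation K (α : K) ≠ 0 from
        fun hz => α.ne_zero ((ν.valuation K).zero_iff.mp hz)))

/-!
Both sides are multiplicative in `α`: the right-hand side because `α` has only finitely many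
nonzero valuations, so the product is a finite one. Dividing `α` by
`∏_{𝔭 ∈ S} x_𝔭 ^ val_𝔭(α)` leaves an element with trivial valuation at every `𝔭 ∈ S`, on which
the two sides agree by (i); and (ii) says precisely that they agree on each `x_𝔭`, whose
`S`-part of the product is `β_𝔭`.
-/

section valZ

variable {K : Type*} [Field K] [NumberField K] (ν : HeightOneSpectrum (𝓞 K))

lemma valZ_eq_neg_log (α : Kˣ) : valZ ν α = -WithZero.log (ν.valuation K α) := by
  rw [valZ, WithZero.toAdd_unzero_eq_log]

lemma valZ_mul (a b : Kˣ) : valZ ν (a * b) = valZ ν a + valZ ν b := by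
  simp only [valZ_eq_neg_log, Units.val_mul, map_mul]
  rw [WithZero.log_mul (by simp) (by simp), neg_add]

lemma valZ_inv (a : Kˣ) : valZ ν a⁻¹ = -valZ ν a := by
  simp only [valZ_eq_neg_log, Units.val_inv_eq_inv_val, map_inv₀, WithZero.log_inv]

lemma valZ_zpow (a : Kˣ) (n : ℤ) : valZ ν (a ^ n) = n * valZ ν a := by
  simp only [valZ_eq_neg_log, Units.val_zpow_eq_zpow_val, map_zpow₀, WithZero.log_zpow,
    smul_eq_mul, mul_neg]

lemma valZ_prod {ι : Type*} (s : Finset ι) (f : ι → Kˣ) :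
    valZ ν (∏ i ∈ s, f i) = ∑ i ∈ s, valZ ν (f i) := by
  classical
  induction s using Finset.induction_on with
  | empty => simp [valZ_eq_neg_log]
  | insert a s ha ih => rw [Finset.prod_insert ha, Finset.sum_insert ha, valZ_mul, ih]

variable (K) in
lemma finite_setOf_valZ_ne_zero (α : Kˣ) :
    {ν : HeightOneSpectrum (𝓞 K) | valZ ν α ≠ 0}.Finite := by
  refine ((HeightOneSpectrum.Support.finite (𝓞 K) (α : K)).union
    (HeightOneSpectrum.Support.finite (𝓞 K) (α⁻¹ : K))).subset fun ν hν => ?_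
  contrapose! hν
  simp only [Set.mem_union, HeightOneSpectrum.Support, Set.mem_ofPred_eq, not_or, not_lt,
    map_inv₀] at hν
  have hpos : 0 < ν.valuation K α := by simp [zero_lt_iff]
  rw [Set.mem_ofPred_eq, not_not, valZ_eq_neg_log,
    le_antisymm hν.1 ((inv_le_one₀ hpos).mp hν.2), WithZero.log_one, neg_zero]

end valZ

lemma finprod_eq_prod_mul_finprod_compl {α M : Type*} [CommMonoid M] {f : α → M}
    (hf : f.HasFiniteMulSupport) (s : Finset α) :
    ∏ᶠ i, f i = (∏ i ∈ s, f i) * ∏ᶠ (i) (_ : i ∉ s), f i := by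
  rw [← finprod_mem_univ, ← Set.union_compl_self (s : Set α),
    finprod_mem_union' disjoint_compl_right (s.finite_toSet.inter_of_left _)
      (hf.inter_of_right _), finprod_mem_coe_finset]
  rfl

lemma MonoidHom.eq_of_eq_mul_inv_prod_zpow {G M ι : Type*} [CommGroup G] [DivisionCommMonoid M]
    (f g : G →* M) (s : Finset ι) (x : ι → G) (n : ι → ℤ) (a : G)
    (hx : ∀ i ∈ s, f (x i) = g (x i))
    (ha : f (a * (∏ i ∈ s, x i ^ n i)⁻¹) = g (a * (∏ i ∈ s, x i ^ n i)⁻¹)) :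
    f a = g a := by
  set w := ∏ i ∈ s, x i ^ n i
  have hw : f w = g w := by
    simp only [w, map_prod, map_zpow]
    exact Finset.prod_congr rfl fun i hi => by rw [hx i hi]
  calc f a = f (a * w⁻¹) * f w := by rw [← map_mul, inv_mul_cancel_right]
    _ = g (a * w⁻¹) * g w := by rw [ha, hw]
    _ = g a := by rw [← map_mul, inv_mul_cancel_right]

section divisorProd

variable {K L : Type*} [Field K] [NumberField K] [Field L]
  (β : HeightOneSpectrum (𝓞 K) → L) (hβ : ∀ ν, β ν ≠ 0)

lemma hasFiniteMulSupport_zpow_valZ (α : Kˣ) :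
    (fun ν => β ν ^ valZ ν α).HasFiniteMulSupport :=
  (finite_setOf_valZ_ne_zero K α).subset fun ν hν h => hν (by simp [h])

noncomputable def divisorProd : Kˣ →* L where
  toFun α := ∏ᶠ ν, β ν ^ valZ ν α
  map_one' := by simp [valZ_eq_neg_log]
  map_mul' a b := by
    simp only [valZ_mul, zpow_add₀ (hβ _)]
    exact finprod_mul_distrib (hasFiniteMulSupport_zpow_valZ β a)
      (hasFiniteMulSupport_zpow_valZ β b)

lemma divisorProd_eq_prod_mul_finprod_compl (S : Finset (HeightOneSpectrum (𝓞 K))) (α : Kˣ) :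
    divisorProd β hβ α =
      (∏ ν ∈ S, β ν ^ valZ ν α) * ∏ᶠ (ν) (_ : ν ∉ S), β ν ^ valZ ν α :=
  finprod_eq_prod_mul_finprod_compl (hasFiniteMulSupport_zpow_valZ β α) S

end divisorProd

lemma valZ_mul_inv_prod_zpow_valZ_eq_zero {K : Type*} [Field K] [NumberField K]
    {S : Finset (HeightOneSpectrum (𝓞 K))} {x : HeightOneSpectrum (𝓞 K) → Kˣ}
    (hx_self : ∀ 𝔭 ∈ S, valZ 𝔭 (x 𝔭) = 1)
    (hx_other : ∀ 𝔭 ∈ S, ∀ 𝔭' ∈ S, 𝔭' ≠ 𝔭 → valZ 𝔭' (x 𝔭) = 0) (α : Kˣ) :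
    ∀ 𝔭 ∈ S, valZ 𝔭 (α * (∏ 𝔮 ∈ S, x 𝔮 ^ valZ 𝔮 α)⁻¹) = 0 := by
  intro 𝔭 h𝔭
  rw [valZ_mul, valZ_inv, valZ_prod, Finset.sum_eq_single_of_mem 𝔭 h𝔭 fun 𝔮 h𝔮 hne => by
    rw [valZ_zpow, hx_other 𝔮 h𝔮 𝔭 h𝔭 hne.symm, mul_zero], valZ_zpow, hx_self 𝔭 h𝔭, mul_one,
    add_neg_cancel]

theorem norm_eq_finprod_of_local_data_general (K L : Type*) [Field K] [Field L]
    [NumberField K] [Algebra L K]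
    (S : Finset (HeightOneSpectrum (𝓞 K)))
    (β : HeightOneSpectrum (𝓞 K) → L) (hβ : ∀ ν, β ν ≠ 0)
    (h1 : ∀ α : Kˣ, (∀ 𝔭 ∈ S, valZ 𝔭 α = 0) →
      Algebra.norm L (α : K) =
        ∏ᶠ (𝔮 : HeightOneSpectrum (𝓞 K)) (_ : 𝔮 ∉ S), β 𝔮 ^ valZ 𝔮 α)
    (h2 : ∀ 𝔭 ∈ S, ∃ x : Kˣ, valZ 𝔭 x = 1 ∧
      (∀ 𝔭' ∈ S, 𝔭' ≠ 𝔭 → valZ 𝔭' x = 0) ∧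
      β 𝔭 = Algebra.norm L (x : K) *
        ∏ᶠ (𝔮 : HeightOneSpectrum (𝓞 K)) (_ : 𝔮 ∉ S), β 𝔮 ^ (-(valZ 𝔮 x)))
    (α : Kˣ) :
    Algebra.norm L (α : K) = ∏ᶠ ν : HeightOneSpectrum (𝓞 K), β ν ^ valZ ν α := by
  classical
  choose! x hx_self hx_other hx_norm using h2
  refine ((Algebra.norm L).comp (Units.coeHom K)).eq_of_eq_mul_inv_prod_zpow (divisorProd β hβ)
    S x (valZ · α) α (fun 𝔭 h𝔭 => ?_) ?_
  · have hS_part : ∏ ν ∈ S, β ν ^ valZ ν (x 𝔭) = β 𝔭 := by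
      rw [Finset.prod_eq_single_of_mem 𝔭 h𝔭 fun 𝔭' h𝔭' hne => by
        rw [hx_other 𝔭 h𝔭 𝔭' h𝔭' hne, zpow_zero], hx_self 𝔭 h𝔭, zpow_one]
    have hne : ∏ᶠ (𝔮) (_ : 𝔮 ∉ S), β 𝔮 ^ valZ 𝔮 (x 𝔭) ≠ 0 :=
      finprod_ne_zero fun 𝔮 => by
        rw [finprod_eq_if]; split_ifs
        exacts [one_ne_zero, zpow_ne_zero _ (hβ 𝔮)]
    rw [divisorProd_eq_prod_mul_finprod_compl β hβ S, hS_part, hx_norm 𝔭 h𝔭]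
    simp only [zpow_neg, finprod_inv_distrib]
    exact (inv_mul_cancel_right₀ hne _).symm
  · set γ := α * (∏ 𝔮 ∈ S, x 𝔮 ^ valZ 𝔮 α)⁻¹
    have hγ : ∀ 𝔭 ∈ S, valZ 𝔭 γ = 0 := valZ_mul_inv_prod_zpow_valZ_eq_zero hx_self hx_other α
    rw [divisorProd_eq_prod_mul_finprod_compl β hβ S,
      Finset.prod_eq_one fun 𝔭 h𝔭 => by rw [hγ 𝔭 h𝔭, zpow_zero], one_mul]
    exact h1 _ hγ

/-- Let `L ⊆ K` be number fields, `S` a nonempty finite set of maximal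
ideals of `𝒪_K` and `β` a function assigning to each maximal ideal `ν` of `𝒪_K` a nonzero
element `β_ν ∈ Lˣ`. Assume:
(i) for every `α ∈ Kˣ` with `val_𝔭(α) = 0` for all `𝔭 ∈ S`,
    `N_{K/L}(α) = ∏_{𝔮 ∉ S} β_𝔮 ^ val_𝔮(α)`;
(ii) for each `𝔭 ∈ S` there is `x_𝔭 ∈ Kˣ` with `val_𝔭(x_𝔭) = 1`, `val_{𝔭'}(x_𝔭) = 0` for all
    `𝔭' ∈ S`, `𝔭' ≠ 𝔭`, and `β_𝔭 = N_{K/L}(x_𝔭) · ∏_{𝔮 ∉ S} β_𝔮 ^ (-val_𝔮(x_𝔭))`.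
Then for every `α ∈ Kˣ`, `N_{K/L}(α) = ∏_ν β_ν ^ val_ν(α)` (products over maximal ideals of
`𝒪_K`, all of them having finitely many factors `≠ 1`). -/
theorem norm_eq_finprod_of_local_data (K L : Type*) [Field K] [Field L]
    [NumberField K] [NumberField L] [Algebra L K]
    (S : Finset (HeightOneSpectrum (𝓞 K))) (hS : S.Nonempty)
    (β : HeightOneSpectrum (𝓞 K) → L) (hβ : ∀ ν, β ν ≠ 0)
    (h1 : ∀ α : Kˣ, (∀ 𝔭 ∈ S, valZ 𝔭 α = 0) →
      Algebra.norm L (α : K) =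
        ∏ᶠ (𝔮 : HeightOneSpectrum (𝓞 K)) (_ : 𝔮 ∉ S), β 𝔮 ^ valZ 𝔮 α)
    (h2 : ∀ 𝔭 ∈ S, ∃ x : Kˣ, valZ 𝔭 x = 1 ∧
      (∀ 𝔭' ∈ S, 𝔭' ≠ 𝔭 → valZ 𝔭' x = 0) ∧
      β 𝔭 = Algebra.norm L (x : K) *
        ∏ᶠ (𝔮 : HeightOneSpectrum (𝓞 K)) (_ : 𝔮 ∉ S), β 𝔮 ^ (-(valZ 𝔮 x)))
    (α : Kˣ) :
    Algebra.norm L (α : K) = ∏ᶠ ν : HeightOneSpectrum (𝓞 K), β ν ^ valZ ν α :=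
  norm_eq_finprod_of_local_data_general K L S β hβ h1 h2 α
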